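/- arXiv:1204.1367 — 9 statements merged into one kernel-verified Lean document; each statement's English description precedes it below -/
import Mathlib

section
/- Let (U,V) be a q-restricted matching vector family in Z_m^n of size t. Then there exists a divisor m' of m having at most q distinct prime factors such that the lists (U mod m', V mod m') form a q-restricted matching vector family in Z_{m'}^n of the same size t. -/
open Finset

/-- Inner product of two vectors in `(ZMod m)^n`. -/
def mvInner {m n : ℕ} (u v : Fin n → ZMod m) : ZMod m := ∑ k, u k * v k

/-- `(U, V)` is a matching vector family of size `t` in `(ZMod m)^n`. -/
def IsMVFamily (m n t : ℕ) (U V : Fin t → Fin n → ZMod m) : Prop :=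
  (∀ i, mvInner (U i) (V i) = 0) ∧ ∀ i j : Fin t, i ≠ j → mvInner (U i) (V j) ≠ 0

/-- The inner products of the family take at most `q` distinct values. -/
def IsQRestricted (m n t q : ℕ) (U V : Fin t → Fin n → ZMod m) : Prop :=
  (Finset.image (fun p : Fin t × Fin t => mvInner (U p.1) (V p.2)) Finset.univ).card ≤ q

/-- Reduction of an element of `ZMod m` modulo `s`. -/
def modRed {m : ℕ} (s : ℕ) (x : ZMod m) : ZMod s := ZMod.cast x

lemma mvInner_modRed {m m' n : ℕ} (h : m' ∣ m) (u v : Fin n → ZMod m) :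
    mvInner (fun k => modRed m' (u k)) (fun k => modRed m' (v k)) = modRed m' (mvInner u v) := by
  have hfun : ∀ x : ZMod m, modRed m' x = ZMod.castHom h (ZMod m') x := fun x => rfl
  simp only [mvInner, hfun, map_sum, map_mul]

/-- Claim 3.2: without loss of generality the modulus has at most `q` distinct prime factors. -/
theorem mv_reduce_prime_factors (m n q t : ℕ) (hm : 2 ≤ m)
    (U V : Fin t → Fin n → ZMod m)
    (hMV : IsMVFamily m n t U V) (hres : IsQRestricted m n t q U V) :
    ∃ m' : ℕ, m' ∣ m ∧ m'.primeFactors.card ≤ q ∧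
      IsMVFamily m' n t (fun i k => modRed m' (U i k)) (fun i k => modRed m' (V i k)) ∧
      IsQRestricted m' n t q (fun i k => modRed m' (U i k)) (fun i k => modRed m' (V i k)) := by
  classical
  have hm0 : m ≠ 0 := by omega
  haveI : NeZero m := ⟨hm0⟩
  -- for every nonzero a, some maximal prime power of m doesn't divide a.val
  have key : ∀ a : ZMod m, a ≠ 0 → ∃ p ∈ m.primeFactors, ¬ p ^ m.factorization p ∣ a.val := by
    intro a ha
    by_contra hcon
    push_neg at hcon
    have hdvd : m ∣ a.val := by
      rw [Nat.dvd_iff_prime_pow_dvd_dvd]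
      intro p k hp hpk
      rcases Nat.eq_zero_or_pos k with hk | hk
      · simp [hk]
      · have hpm : p ∣ m := dvd_trans (dvd_pow_self p hk.ne') hpk
        have hpf : p ∈ m.primeFactors := Nat.mem_primeFactors.mpr ⟨hp, hpm, hm0⟩
        have hle : k ≤ m.factorization p := (Nat.Prime.pow_dvd_iff_le_factorization hp hm0).mp hpk
        exact dvd_trans (pow_dvd_pow p hle) (hcon p hpf)
    have hval0 : a.val = 0 := Nat.eq_zero_of_dvd_of_lt hdvd (ZMod.val_lt a)
    exact ha ((ZMod.val_eq_zero a).mp hval0)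
  -- choice of prime for each nonzero value
  let g : ZMod m → ℕ := fun a => if h : a ≠ 0 then (key a h).choose else 2
  have hg1 : ∀ a : ZMod m, a ≠ 0 → g a ∈ m.primeFactors := by
    intro a ha
    simp only [g, dif_pos ha]
    exact (key a ha).choose_spec.1
  have hg2 : ∀ a : ZMod m, (ha : a ≠ 0) → ¬ (g a) ^ m.factorization (g a) ∣ a.val := by
    intro a ha
    simp only [g, dif_pos ha]
    exact (key a ha).choose_spec.2
  set S : Finset (ZMod m) :=
    Finset.image (fun p : Fin t × Fin t => mvInner (U p.1) (V p.2)) Finset.univ with hS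
  set S₀ : Finset (ZMod m) := S.filter (· ≠ 0) with hS₀
  set P : Finset ℕ := S₀.image g with hP
  set m' : ℕ := ∏ p ∈ P, p ^ m.factorization p with hm'
  have hPsub : P ⊆ m.primeFactors := by
    intro p hp
    rw [hP, Finset.mem_image] at hp
    obtain ⟨a, ha, rfl⟩ := hp
    exact hg1 a (Finset.mem_filter.mp ha).2
  have hdvdm : m' ∣ m := by
    have h2 : ∏ p ∈ m.primeFactors, p ^ m.factorization p = m := by
      rw [← Nat.prod_factorization_eq_prod_primeFactors (· ^ ·),
        Nat.factorization_prod_pow_eq_self hm0]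
    calc m' ∣ ∏ p ∈ m.primeFactors, p ^ m.factorization p :=
          Finset.prod_dvd_prod_of_subset P m.primeFactors (fun p => p ^ m.factorization p) hPsub
      _ = m := h2
  have hm'0 : m' ≠ 0 := fun h => hm0 (eq_zero_of_zero_dvd (h ▸ hdvdm))
  haveI : NeZero m' := ⟨hm'0⟩
  -- reduction of a nonzero attained value is nonzero
  have hnz : ∀ a : ZMod m, a ∈ S₀ → modRed m' a ≠ 0 := by
    intro a haS hzero
    have ha : a ≠ 0 := (Finset.mem_filter.mp haS).2
    have hmem : g a ∈ P := Finset.mem_image.mpr ⟨a, haS, rfl⟩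
    have hppdvd : (g a) ^ m.factorization (g a) ∣ m' :=
      Finset.dvd_prod_of_mem (fun p => p ^ m.factorization p) hmem
    have hcast : modRed m' a = ((a.val : ℕ) : ZMod m') := by
      rw [modRed, ← ZMod.natCast_val]
    rw [hcast, ZMod.natCast_eq_zero_iff] at hzero
    exact hg2 a ha (dvd_trans hppdvd hzero)
  refine ⟨m', hdvdm, ?_, ⟨?_, ?_⟩, ?_⟩
  · -- prime factor count
    have hsub : m'.primeFactors ⊆ P := by
      intro p hp
      obtain ⟨hp1, hp2, _⟩ := Nat.mem_primeFactors.mp hp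
      obtain ⟨r, hr, hdr⟩ := hp1.prime.exists_mem_finset_dvd hp2
      have hrp : r.Prime := Nat.prime_of_mem_primeFactors (hPsub hr)
      have : p = r := (Nat.prime_dvd_prime_iff_eq hp1 hrp).mp (hp1.dvd_of_dvd_pow hdr)
      exact this ▸ hr
    calc m'.primeFactors.card ≤ P.card := Finset.card_le_card hsub
      _ ≤ S₀.card := Finset.card_image_le
      _ ≤ S.card := Finset.card_le_card (Finset.filter_subset _ _)
      _ ≤ q := hres
  · -- diagonal
    intro i
    rw [mvInner_modRed hdvdm, hMV.1 i]
    exact (ZMod.castHom hdvdm (ZMod m')).map_zero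
  · -- off-diagonal
    intro i j hij
    rw [mvInner_modRed hdvdm]
    apply hnz
    refine Finset.mem_filter.mpr ⟨Finset.mem_image.mpr ⟨(i, j), Finset.mem_univ _, rfl⟩,
      hMV.2 i j hij⟩
  · -- q-restricted
    unfold IsQRestricted
    have himg : (Finset.image
        (fun p : Fin t × Fin t => mvInner (fun k => modRed m' (U p.1 k))
          (fun k => modRed m' (V p.2 k))) Finset.univ) = S.image (modRed m') := by
      rw [hS, Finset.image_image]
      apply Finset.image_congr
      intro p _
      exact mvInner_modRed hdvdm (U p.1) (V p.2)
    rw [himg]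
    exact le_trans Finset.card_image_le hres
end

section
/- Let M be a t × t matrix over Z_m (m ≥ 2). Then rank(M)/log m ≤ colrank(M) ≤ rank(M), where log denotes logarithm base 2. -/
/-! By the structure theorem, a finite abelian group `G` is generated by `k` elements with
`2 ^ k ≤ |G|`: one generator for each cyclic factor, each of order at least `2`. Applied to the
column span of `M`, these generators are the columns of a `t × k` matrix `A` with `M = A * B`,
so `2 ^ rank M ≤ |colspan M|`. Conversely `M = A * B` with `A` of width `rank M` puts
`colspan M` inside the image of `A`, of size at most `m ^ rank M`. Taking logarithms gives both
bounds. -/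

/-- The rank of a square matrix over `ZMod m`: the smallest `r` such that `M = A * B`
with `A` a `t × r` matrix and `B` an `r × t` matrix. -/
noncomputable def mrank {m t : ℕ} (M : Matrix (Fin t) (Fin t) (ZMod m)) : ℕ :=
  sInf {r : ℕ | ∃ (A : Matrix (Fin t) (Fin r) (ZMod m)) (B : Matrix (Fin r) (Fin t) (ZMod m)),
    M = A * B}

/-- The column rank of a square matrix over `ZMod m`: `log_m` of the size of the additive
subgroup of `(ZMod m)^t` generated by the columns of `M`. -/
noncomputable def colrank {m t : ℕ} (M : Matrix (Fin t) (Fin t) (ZMod m)) : ℝ :=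
  Real.logb (m : ℝ)
    (((AddSubgroup.closure (Set.range fun j => fun i => M i j) :
      AddSubgroup (Fin t → ZMod m)) : Set (Fin t → ZMod m)).ncard : ℝ)

open Matrix

theorem AddCommGroup.exists_fin_closure_eq_top_two_pow_le (G : Type*) [AddCommGroup G]
    [Finite G] :
    ∃ (k : ℕ) (g : Fin k → G), AddSubgroup.closure (Set.range g) = ⊤ ∧ 2 ^ k ≤ Nat.card G := by
  classical
  obtain ⟨ι, _, n, hn, ⟨e⟩⟩ := equiv_directSum_zmod_of_finite' G
  let e' : G ≃+ ((i : ι) → ZMod (n i)) := e.trans (DirectSum.addEquivProd _)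
  let σ := Fintype.equivFin ι
  refine ⟨Fintype.card ι, fun k => e'.symm (Pi.single (σ.symm k) 1), ?_, ?_⟩
  · rw [eq_top_iff]
    intro x _
    rw [← e'.symm_apply_apply x, ← Finset.univ_sum_single (e' x), map_sum]
    refine AddSubgroup.sum_mem _ fun i _ => ?_
    obtain ⟨z, hz⟩ := ZMod.intCast_surjective (e' x i)
    rw [← hz, ← zsmul_one, Pi.single_zsmul, map_zsmul]
    refine AddSubgroup.zsmul_mem _ (AddSubgroup.subset_closure (Set.mem_range.2 ⟨σ i, ?_⟩)) z
    rw [Equiv.symm_apply_apply]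
  · calc 2 ^ Fintype.card ι = ∏ _i : ι, 2 := by simp
      _ ≤ ∏ i, n i := Finset.prod_le_prod' fun i _ => hn i
      _ = Nat.card G := by simp [Nat.card_congr e'.toEquiv, Nat.card_pi, Nat.card_zmod]

namespace Matrix

variable {R : Type*} [CommRing R] {m n o : Type*} [Fintype o]

theorem closure_range_col_mul_le (A : Matrix m o R) (B : Matrix o n R) :
    AddSubgroup.closure (Set.range (A * B).col) ≤ (LinearMap.range A.mulVecLin).toAddSubgroup := by
  rw [AddSubgroup.closure_le]
  rintro _ ⟨j, rfl⟩
  exact ⟨B.col j, by ext i; simp [mulVec, dotProduct, mul_apply]⟩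

theorem card_closure_range_col_mul_le [Finite R] (A : Matrix m o R) (B : Matrix o n R) :
    Nat.card (AddSubgroup.closure (Set.range (A * B).col)) ≤ Nat.card R ^ Fintype.card o := by
  have : Finite (LinearMap.range A.mulVecLin) :=
    Finite.of_surjective _ A.mulVecLin.surjective_rangeRestrict
  calc _ ≤ Nat.card (LinearMap.range A.mulVecLin) :=
        AddSubgroup.card_le_of_le (closure_range_col_mul_le A B)
    _ ≤ Nat.card (o → R) := Nat.card_le_card_of_surjective _ A.mulVecLin.surjective_rangeRestrict
    _ = _ := by rw [Nat.card_fun, Nat.card_eq_fintype_card (α := o)]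

theorem exists_eq_mul_of_col_mem_span (M : Matrix m n R) (A : Matrix m o R)
    (h : ∀ j, M.col j ∈ Submodule.span R (Set.range A.col)) : ∃ B : Matrix o n R, M = A * B := by
  simp_rw [← range_mulVecLin] at h
  choose b hb using h
  refine ⟨of fun k j => b j k, ?_⟩
  ext i j
  simpa [mulVec, dotProduct, mul_apply] using (congrFun (hb j) i).symm

end Matrix

section mrank

variable {m t : ℕ}

theorem mrank_le_of_eq_mul {M : Matrix (Fin t) (Fin t) (ZMod m)} {r : ℕ}
    (A : Matrix (Fin t) (Fin r) (ZMod m)) (B : Matrix (Fin r) (Fin t) (ZMod m)) (h : M = A * B) :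
    mrank M ≤ r :=
  Nat.sInf_le ⟨A, B, h⟩

theorem exists_eq_mul_mrank (M : Matrix (Fin t) (Fin t) (ZMod m)) :
    ∃ (A : Matrix (Fin t) (Fin (mrank M)) (ZMod m)) (B : Matrix (Fin (mrank M)) (Fin t) (ZMod m)),
      M = A * B :=
  Nat.sInf_mem (s := {r | ∃ (A : Matrix (Fin t) (Fin r) (ZMod m))
    (B : Matrix (Fin r) (Fin t) (ZMod m)), M = A * B}) ⟨t, M, 1, (mul_one M).symm⟩

theorem card_closure_range_col_le_pow_mrank [NeZero m] (M : Matrix (Fin t) (Fin t) (ZMod m)) :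
    Nat.card (AddSubgroup.closure (Set.range M.col)) ≤ m ^ mrank M := by
  obtain ⟨A, B, hAB⟩ := exists_eq_mul_mrank M
  simpa [hAB, Nat.card_zmod] using card_closure_range_col_mul_le A B

theorem two_pow_mrank_le_card_closure_range_col [NeZero m]
    (M : Matrix (Fin t) (Fin t) (ZMod m)) :
    2 ^ mrank M ≤ Nat.card (AddSubgroup.closure (Set.range M.col)) := by
  set G := AddSubgroup.closure (Set.range M.col)
  obtain ⟨k, g, hg, hk⟩ := AddCommGroup.exists_fin_closure_eq_top_two_pow_le G
  let A : Matrix (Fin t) (Fin k) (ZMod m) := of fun i l => (g l : Fin t → ZMod m) i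
  have hG : G = AddSubgroup.closure (Set.range A.col) := by
    rw [← G.range_subtype, AddMonoidHom.range_eq_map, ← hg, AddMonoidHom.map_closure,
      ← Set.range_comp]
    congr 2
  have hcol : ∀ j, M.col j ∈ Submodule.span (ZMod m) (Set.range A.col) := fun j => by
    have hj : M.col j ∈ G := AddSubgroup.subset_closure (Set.mem_range_self j)
    rw [hG] at hj
    exact (AddSubgroup.closure_le (Submodule.span (ZMod m) (Set.range A.col)).toAddSubgroup).2
      Submodule.subset_span hj
  obtain ⟨B, hB⟩ := exists_eq_mul_of_col_mem_span M A hcol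
  exact (Nat.pow_le_pow_right two_pos (mrank_le_of_eq_mul A B hB)).trans hk

theorem colrank_eq_logb_card (M : Matrix (Fin t) (Fin t) (ZMod m)) :
    colrank M = Real.logb m (Nat.card (AddSubgroup.closure (Set.range M.col))) := by
  rw [colrank, ← Nat.card_coe_set_eq]
  rfl

end mrank

theorem Real.div_logb_le_logb_of_two_pow_le {b x : ℝ} {r : ℕ} (hb : 1 < b) (hx : 2 ^ r ≤ x) :
    r / logb 2 b ≤ logb b x := by
  have hx₀ : 0 < x := lt_of_lt_of_le (by positivity) hx
  have hr : (r : ℝ) ≤ logb 2 x := by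
    rwa [le_logb_iff_rpow_le one_lt_two hx₀, rpow_natCast]
  have hchange : logb b x = logb 2 x / logb 2 b := by
    simp only [logb]
    rw [div_div_div_cancel_right₀ (log_pos one_lt_two).ne']
  rw [hchange]
  exact div_le_div_of_nonneg_right hr (logb_pos one_lt_two hb).le

/-- Claim 4.3: `rank(M)/log m ≤ colrank(M) ≤ rank(M)`. -/
theorem rank_colrank_relation (m t : ℕ) (hm : 2 ≤ m) (M : Matrix (Fin t) (Fin t) (ZMod m)) :
    (mrank M : ℝ) / Real.logb 2 (m : ℝ) ≤ colrank M ∧ colrank M ≤ (mrank M : ℝ) := by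
  have : NeZero m := ⟨by omega⟩
  have hm₁ : (1 : ℝ) < m := by exact_mod_cast hm
  rw [colrank_eq_logb_card]
  constructor
  · exact Real.div_logb_le_logb_of_two_pow_le hm₁
      (by exact_mod_cast two_pow_mrank_le_card_closure_range_col M)
  · rw [Real.logb_le_iff_le_rpow hm₁ (by exact_mod_cast Nat.card_pos), Real.rpow_natCast]
    exact_mod_cast card_closure_range_col_le_pow_mrank M
end

section
/- Let m ≥ 2 and let s be a divisor of m with 1 < s < m. Let (U,V) be a matching vector family in Z_m^n such that ⟨u,v⟩ ≡ 0 (mod s) for all u ∈ U, v ∈ V. Then |(U,V)| ≤ MV(m/s, n·log m), where log denotes logarithm base 2. -/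
/-!
The subgroup `H` of `(ZMod m)^n` of vectors whose inner product with every `v_j` vanishes modulo
`s` contains all `u_i`. As the image of a subgroup of `ℤ^n`, it has `l ≤ n` generators `g_k`, so
`u_i = ∑ a_ik • g_k` with `a_ik ∈ ℤ`. Each `⟨g_k, v_j⟩` is `s * c_jk` with `c_jk ∈ ZMod (m / s)`,
hence `⟨u_i, v_j⟩ = s * ⟨a_i, c_j⟩`. Multiplication by `s` embeds `ZMod (m / s)` into `ZMod m`, so
`(a_i, c_j)` is a matching vector family in `(ZMod (m / s))^l`, and `l ≤ n ≤ n log m`.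
-/

open Finset

/-- `MVmax m n` is the maximum size of a matching vector family in `(ZMod m)^n`. -/
noncomputable def MVmax (m n : ℕ) : ℕ :=
  sSup {t : ℕ | ∃ U V : Fin t → Fin n → ZMod m, IsMVFamily m n t U V}

theorem AddSubgroup.exists_fin_le_sum_zsmul_of_surjective {A : Type*} [AddCommGroup A] {n : ℕ}
    (π : (Fin n → ℤ) →+ A) (hπ : Function.Surjective π) (H : AddSubgroup A) :
    ∃ l ≤ n, ∃ g : Fin l → A, (∀ k, g k ∈ H) ∧
      ∀ u ∈ H, ∃ a : Fin l → ℤ, u = ∑ k, a k • g k := by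
  let N := (H.comap π).toIntSubmodule
  let b := Module.finBasis ℤ N
  refine ⟨Module.finrank ℤ N, ?_, fun k => π (b k), fun k => (b k).2, fun u hu => ?_⟩
  · simpa using N.finrank_le
  · obtain ⟨y, rfl⟩ := hπ u
    refine ⟨b.repr ⟨y, hu⟩, ?_⟩
    have hy := congrArg Subtype.val (b.sum_repr ⟨y, hu⟩)
    simp only [Submodule.coe_sum, Submodule.coe_smul] at hy
    conv_lhs => rw [← hy]
    simp only [map_sum, map_zsmul]

section MVInner

variable {m n : ℕ}

theorem mvInner_eq_dotProduct (u v : Fin n → ZMod m) : mvInner u v = u ⬝ᵥ v := rfl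

theorem mvInner_sum_zsmul_left {l : ℕ} (a : Fin l → ℤ) (g : Fin l → Fin n → ZMod m)
    (v : Fin n → ZMod m) : mvInner (∑ k, a k • g k) v = ∑ k, a k • mvInner (g k) v := by
  simp only [mvInner_eq_dotProduct, sum_dotProduct, smul_dotProduct]

theorem map_mvInner_intCast_left {r l : ℕ} {M : Type*} [AddCommGroup M] (φ : ZMod r →+ M)
    (a : Fin l → ℤ) (c : Fin l → ZMod r) :
    φ (mvInner (fun k => (a k : ZMod r)) c) = ∑ k, a k • φ (c k) := by
  simp only [mvInner, map_sum, ← zsmul_eq_mul, map_zsmul]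

def mvInnerZeroModSubgroup {s t : ℕ} (hs : s ∣ m) (V : Fin t → Fin n → ZMod m) :
    AddSubgroup (Fin n → ZMod m) where
  carrier := {y | ∀ j, (ZMod.cast (mvInner y (V j)) : ZMod s) = 0}
  zero_mem' j := by simp [mvInner]
  add_mem' {y z} hy hz j := by
    simp only [Set.mem_ofPred_eq, mvInner_eq_dotProduct, add_dotProduct] at hy hz ⊢
    rw [ZMod.cast_add hs, hy, hz, add_zero]
  neg_mem' {y} hy j := by
    simp only [Set.mem_ofPred_eq, mvInner_eq_dotProduct, neg_dotProduct] at hy ⊢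
    rw [ZMod.cast_neg hs, hy, neg_zero]

end MVInner

namespace ZMod

variable {m s : ℕ}

noncomputable def divisorMulHom (hs : s ∣ m) : ZMod (m / s) →+ ZMod m :=
  ZMod.lift (m / s) ⟨zmultiplesHom (ZMod m) (s : ZMod m), by
    change ((m / s : ℕ) : ℤ) • (s : ZMod m) = 0
    rw [natCast_zsmul, nsmul_eq_mul, ← Nat.cast_mul, Nat.div_mul_cancel hs, natCast_self]⟩

theorem divisorMulHom_intCast (hs : s ∣ m) (a : ℤ) :
    divisorMulHom hs (a : ZMod (m / s)) = a * s := by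
  rw [divisorMulHom, lift_coe]
  exact zsmul_eq_mul _ _

theorem divisorMulHom_natCast (hs : s ∣ m) (a : ℕ) :
    divisorMulHom hs (a : ZMod (m / s)) = a * s :=
  mod_cast divisorMulHom_intCast hs a

theorem neZero_div [NeZero m] (hs : s ∣ m) : NeZero (m / s) :=
  ⟨(Nat.div_pos (Nat.le_of_dvd (NeZero.pos m) hs) (Nat.pos_of_dvd_of_pos hs (NeZero.pos m))).ne'⟩

theorem divisorMulHom_injective [NeZero m] (hs : s ∣ m) :
    Function.Injective (divisorMulHom hs) := by
  have hs0 : 0 < s := Nat.pos_of_dvd_of_pos hs (NeZero.pos m)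
  have := neZero_div hs
  rw [injective_iff_map_eq_zero]
  intro c hc
  rw [← natCast_zmod_val c, divisorMulHom_natCast, ← Nat.cast_mul, natCast_eq_zero_iff] at hc
  have hdvd : m / s ∣ c.val := (Nat.mul_dvd_mul_iff_right hs0).mp (by rwa [Nat.div_mul_cancel hs])
  rw [← natCast_zmod_val c, Nat.eq_zero_of_dvd_of_lt hdvd (val_lt c), Nat.cast_zero]

theorem exists_divisorMulHom_eq [NeZero m] (hs : s ∣ m) {y : ZMod m}
    (hy : (ZMod.cast y : ZMod s) = 0) : ∃ c, divisorMulHom hs c = y := by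
  rw [cast_eq_val, natCast_eq_zero_iff] at hy
  refine ⟨(y.val / s : ℕ), ?_⟩
  rw [divisorMulHom_natCast, ← Nat.cast_mul, Nat.div_mul_cancel hy, natCast_zmod_val]

end ZMod

namespace IsMVFamily

variable {m n t : ℕ} {U V : Fin t → Fin n → ZMod m}

theorem injective_left (h : IsMVFamily m n t U V) : Function.Injective U := by
  intro i j hij
  by_contra hne
  exact h.2 j i (Ne.symm hne) (hij ▸ h.1 i)

theorem le_card [NeZero m] (h : IsMVFamily m n t U V) : t ≤ m ^ n := by
  simpa using Fintype.card_le_of_injective U h.injective_left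

theorem le_MVmax [NeZero m] (h : IsMVFamily m n t U V) : t ≤ MVmax m n :=
  le_csSup ⟨m ^ n, fun _ ⟨_, _, h'⟩ => h'.le_card⟩ ⟨U, V, h⟩

theorem append_zero (h : IsMVFamily m n t U V) (k : ℕ) :
    IsMVFamily m (n + k) t (fun i => Fin.append (U i) 0) (fun j => Fin.append (V j) 0) := by
  have hpad : ∀ i j, mvInner (Fin.append (U i) 0) (Fin.append (V j) (0 : Fin k → ZMod m)) =
      mvInner (U i) (V j) := by
    intro i j
    simp [mvInner, Fin.sum_univ_add]
  exact ⟨fun i => (hpad i i).trans (h.1 i), fun i j hij => (hpad i j).trans_ne (h.2 i j hij)⟩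

theorem le_MVmax_of_le [NeZero m] (h : IsMVFamily m n t U V) {D : ℕ} (hD : n ≤ D) :
    t ≤ MVmax m D := by
  obtain ⟨k, rfl⟩ := Nat.exists_eq_add_of_le hD
  exact (h.append_zero k).le_MVmax

theorem of_map_mvInner {r l : ℕ} {U' V' : Fin t → Fin l → ZMod r} {φ : ZMod r →+ ZMod m}
    (h : IsMVFamily m n t U V) (hφ : Function.Injective φ)
    (hUV : ∀ i j, φ (mvInner (U' i) (V' j)) = mvInner (U i) (V j)) :
    IsMVFamily r l t U' V' := by
  refine ⟨fun i => hφ ?_, fun i j hij hzero => h.2 i j hij ?_⟩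
  · rw [hUV, map_zero, h.1 i]
  · rw [← hUV, hzero, map_zero]

end IsMVFamily

theorem le_floor_mul_logb {m : ℕ} (hm : 2 ≤ m) (n : ℕ) :
    n ≤ ⌊(n : ℝ) * Real.logb 2 (m : ℝ)⌋₊ := by
  have h1 : 1 ≤ Real.logb 2 (m : ℝ) := by
    rw [Real.le_logb_iff_rpow_le (by norm_num) (by positivity)]
    simpa using (Nat.cast_le (α := ℝ)).mpr hm
  exact Nat.le_floor (le_mul_of_one_le_right (Nat.cast_nonneg n) h1)

theorem mv_bound_of_zero_mod_divisor_general (m n s : ℕ) (hm : 2 ≤ m) (hs : s ∣ m)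
    (t : ℕ) (U V : Fin t → Fin n → ZMod m) (hMV : IsMVFamily m n t U V)
    (hIP : ∀ i j : Fin t, (ZMod.cast (mvInner (U i) (V j)) : ZMod s) = 0) :
    t ≤ MVmax (m / s) ⌊(n : ℝ) * Real.logb 2 (m : ℝ)⌋₊ := by
  have : NeZero m := ⟨by omega⟩
  have := ZMod.neZero_div hs
  obtain ⟨l, hln, g, hg, hspan⟩ := AddSubgroup.exists_fin_le_sum_zsmul_of_surjective
    ((Int.castAddHom (ZMod m)).compLeft (Fin n)) ZMod.intCast_surjective.comp_left
    (mvInnerZeroModSubgroup hs V)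
  choose a ha using fun i => hspan (U i) (hIP i)
  choose c hc using fun j k => ZMod.exists_divisorMulHom_eq hs (hg k j)
  have hUV : ∀ i j, ZMod.divisorMulHom hs (mvInner (fun k => (a i k : ZMod (m / s))) (c j)) =
      mvInner (U i) (V j) := by
    intro i j
    rw [map_mvInner_intCast_left, ha i, mvInner_sum_zsmul_left]
    simp only [hc]
  exact (hMV.of_map_mvInner (ZMod.divisorMulHom_injective hs) hUV).le_MVmax_of_le
    (hln.trans (le_floor_mul_logb hm n))

/-- Lemma 5.2: if all inner products of an MV family in `(ZMod m)^n` vanish modulo a proper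
divisor `s` of `m`, then the family has size at most `MV(m/s, n·log m)`. -/
theorem mv_bound_of_zero_mod_divisor (m n s : ℕ) (hm : 2 ≤ m) (hs : s ∣ m)
    (hs1 : 1 < s) (hsm : s < m)
    (t : ℕ) (U V : Fin t → Fin n → ZMod m) (hMV : IsMVFamily m n t U V)
    (hIP : ∀ i j : Fin t, (ZMod.cast (mvInner (U i) (V j)) : ZMod s) = 0) :
    t ≤ MVmax (m / s) ⌊(n : ℝ) * Real.logb 2 (m : ℝ)⌋₊ :=
  mv_bound_of_zero_mod_divisor_general m n s hm hs t U V hMV hIP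
end

section
/- Let (U,V) be a matching vector family in Z_m^n and let s be a divisor of m with 1 < s < m. Then for every w ∈ Z_s^n, the number of elements u ∈ U with u ≡ w (mod s) is at most MV(m/s, n·log m); by symmetry the same bound holds for V, where log denotes logarithm base 2. -/
open Finset

lemma mv_card_le {m n t : ℕ} (hm : m ≠ 0) {U V : Fin t → Fin n → ZMod m}
    (h : IsMVFamily m n t U V) : t ≤ m ^ n := by
  haveI : NeZero m := ⟨hm⟩
  have hU : Function.Injective U := by
    intro i j hij
    by_contra hne
    exact h.2 i j hne (by rw [hij]; exact h.1 j)
  calc t = Fintype.card (Fin t) := (Fintype.card_fin t).symm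
    _ ≤ Fintype.card (Fin n → ZMod m) := Fintype.card_le_of_injective U hU
    _ = m ^ n := by simp [Fintype.card_fun]

lemma mvBdd (m n : ℕ) (hm : m ≠ 0) :
    BddAbove {t : ℕ | ∃ U V : Fin t → Fin n → ZMod m, IsMVFamily m n t U V} :=
  ⟨m ^ n, fun _ ⟨_, _, h⟩ => mv_card_le hm h⟩

lemma mvZeroMem (m n : ℕ) :
    0 ∈ {t : ℕ | ∃ U V : Fin t → Fin n → ZMod m, IsMVFamily m n t U V} :=
  ⟨fun i => i.elim0, fun i => i.elim0, fun i => i.elim0, fun i => i.elim0⟩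

lemma mvmax_mono (m : ℕ) (hm : m ≠ 0) {N N' : ℕ} (h : N ≤ N') :
    MVmax m N ≤ MVmax m N' := by
  apply csSup_le_csSup (mvBdd m N' hm) ⟨0, mvZeroMem m N⟩
  rintro t ⟨U, V, hUV⟩
  obtain ⟨d, rfl⟩ := Nat.exists_eq_add_of_le h
  refine ⟨fun i => Fin.append (U i) 0, fun j => Fin.append (V j) 0, ?_, ?_⟩
  · intro i
    have := hUV.1 i
    unfold mvInner at *
    rw [Fin.sum_univ_add]
    simpa using this
  · intro i j hij
    have := hUV.2 i j hij
    unfold mvInner at *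
    rw [Fin.sum_univ_add]
    simpa using this

lemma mvOneMem (m : ℕ) (hm : m ≠ 0) : 1 ≤ MVmax m 0 := by
  apply le_csSup (mvBdd m 0 hm)
  refine ⟨fun _ _ => 0, fun _ _ => 0, fun i => by simp [mvInner], fun i j hij => ?_⟩
  exact absurd (Subsingleton.elim i j) hij

lemma bucket_one (m n s : ℕ) (hs : s ∣ m) (hs1 : 1 < s) (hsm : s < m)
    {t : ℕ} (U V : Fin t → Fin n → ZMod m) (hMV : IsMVFamily m n t U V)
    (w : Fin n → ZMod s) :
    ({i : Fin t | ∀ k, (ZMod.cast (U i k) : ZMod s) = w k}).ncard ≤ MVmax (m / s) (n + 1) := by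
  classical
  set r := m / s with hr
  have hmr : s * r = m := Nat.mul_div_cancel' hs
  have hs0 : s ≠ 0 := by omega
  have hr2 : 2 ≤ r := by
    by_contra h
    push_neg at h
    interval_cases r <;> omega
  have hr0 : r ≠ 0 := by omega
  have hm0 : m ≠ 0 := by omega
  haveI : NeZero m := ⟨hm0⟩
  haveI : NeZero s := ⟨hs0⟩
  haveI : NeZero r := ⟨hr0⟩
  set S := {i : Fin t | ∀ k, (ZMod.cast (U i k) : ZMod s) = w k} with hS
  haveI : Fintype S := Fintype.ofFinite S
  have hBcard : S.ncard = Fintype.card S := by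
    rw [← Nat.card_coe_set_eq, Nat.card_eq_fintype_card]
  -- integer lifts
  set a : S → Fin n → ℤ := fun i k => (((U i.1 k).val : ℤ) - ((w k).val : ℤ)) / s with ha
  have hsa : ∀ (i : S) (k : Fin n),
      (s : ℤ) * a i k = ((U i.1 k).val : ℤ) - ((w k).val : ℤ) := by
    intro i k
    apply Int.mul_ediv_cancel'
    have h1 : (((U i.1 k).val : ZMod s)) = (((w k).val : ZMod s)) := by
      rw [ZMod.natCast_val, ZMod.natCast_val, ZMod.cast_id]
      exact i.2 k
    exact ((ZMod.natCast_eq_natCast_iff _ _ _).mp h1).symm.dvd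
  -- the integer-valued cross inner products
  set X : S → S → ℤ := fun i j => ∑ k, (a i k - a j k) * ((V j.1 k).val : ℤ) with hX
  have key : ∀ i j : S, mvInner (U i.1) (V j.1) = (((s : ℤ) * X i j : ℤ) : ZMod m) := by
    intro i j
    have hdiag := hMV.1 j.1
    have step1 : mvInner (U i.1) (V j.1)
        = ∑ k, (U i.1 k - U j.1 k) * V j.1 k := by
      unfold mvInner at hdiag ⊢
      calc (∑ k, U i.1 k * V j.1 k)
          = ∑ k, ((U i.1 k - U j.1 k) * V j.1 k + U j.1 k * V j.1 k) := by
            apply Finset.sum_congr rfl; intro k _; ring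
        _ = (∑ k, (U i.1 k - U j.1 k) * V j.1 k) + ∑ k, U j.1 k * V j.1 k :=
            Finset.sum_add_distrib
        _ = ∑ k, (U i.1 k - U j.1 k) * V j.1 k := by rw [hdiag, add_zero]
    rw [step1]
    have hterm : ∀ k, (U i.1 k - U j.1 k) * V j.1 k
        = (((s : ℤ) * (a i k - a j k) * ((V j.1 k).val : ℤ) : ℤ) : ZMod m) := by
      intro k
      have hu : ∀ x : ZMod m, ((x.val : ℤ) : ZMod m) = x := by
        intro x; push_cast [ZMod.natCast_val, ZMod.cast_id]; rfl
      have h2 : (s : ℤ) * (a i k - a j k) = ((U i.1 k).val : ℤ) - ((U j.1 k).val : ℤ) := by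
        rw [mul_sub, hsa i k, hsa j k]; ring
      rw [h2]
      push_cast [ZMod.natCast_val, ZMod.cast_id]
      rfl
    rw [Finset.sum_congr rfl (fun k _ => hterm k)]
    rw [hX]
    push_cast
    rw [Finset.mul_sum]
    apply Finset.sum_congr rfl
    intro k _
    ring
  -- the new family over ZMod r in dimension n+1
  set c : S → S → ZMod r := fun i j => ((∑ k, a i k * ((V j.1 k).val : ℤ) : ℤ) : ZMod r) with hc
  set U' : S → Fin (n + 1) → ZMod r :=
    fun i => Fin.snoc (fun k => ((a i k : ℤ) : ZMod r)) 1 with hU'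
  set V' : S → Fin (n + 1) → ZMod r :=
    fun j => Fin.snoc (fun k => (((V j.1 k).val : ℤ) : ZMod r)) (-(c j j)) with hV'
  have hinner' : ∀ i j : S, mvInner (U' i) (V' j) = ((X i j : ℤ) : ZMod r) := by
    intro i j
    unfold mvInner
    rw [Fin.sum_univ_castSucc]
    simp only [hU', hV', Fin.snoc_castSucc, Fin.snoc_last]
    rw [hX, hc]
    push_cast
    simp only [sub_mul]
    rw [Finset.sum_sub_distrib]
    ring
  have hXdiag : ∀ i : S, X i i = 0 := by
    intro i; rw [hX]; simp
  have hfam : IsMVFamily r (n + 1) (Fintype.card S)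
      (fun b => U' ((Fintype.equivFin S).symm b)) (fun b => V' ((Fintype.equivFin S).symm b)) := by
    constructor
    · intro i
      rw [hinner', hXdiag]
      simp
    · intro i j hij
      set i' := (Fintype.equivFin S).symm i
      set j' := (Fintype.equivFin S).symm j
      have hij' : i'.1 ≠ j'.1 := by
        intro h
        exact hij (by
          have : i' = j' := Subtype.ext h
          simpa [i', j'] using congrArg (Fintype.equivFin S) this)
      have hne := hMV.2 i'.1 j'.1 hij'
      rw [key i' j'] at hne
      rw [hinner' i' j']
      intro h0
      apply hne
      rw [ZMod.intCast_zmod_eq_zero_iff_dvd] at h0 ⊢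
      rw [← hmr]
      push_cast
      exact mul_dvd_mul_left (s : ℤ) h0
  rw [hBcard]
  exact le_csSup (mvBdd r (n + 1) hr0) ⟨_, _, hfam⟩

lemma mvInner_comm {m n : ℕ} (u v : Fin n → ZMod m) : mvInner u v = mvInner v u :=
  Finset.sum_congr rfl (fun k _ => mul_comm _ _)

lemma isMVFamily_swap {m n t : ℕ} {U V : Fin t → Fin n → ZMod m}
    (h : IsMVFamily m n t U V) : IsMVFamily m n t V U :=
  ⟨fun i => (mvInner_comm _ _).trans (h.1 i),
   fun i j hij => by rw [mvInner_comm]; exact h.2 j i (Ne.symm hij)⟩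

lemma bucket_bound_aux (m n s : ℕ) (hs : s ∣ m) (hs1 : 1 < s) (hsm : s < m)
    {t : ℕ} (U V : Fin t → Fin n → ZMod m) (hMV : IsMVFamily m n t U V)
    (w : Fin n → ZMod s) :
    ({i : Fin t | ∀ k, (ZMod.cast (U i k) : ZMod s) = w k}).ncard ≤
        MVmax (m / s) ⌊(n : ℝ) * Real.logb 2 (m : ℝ)⌋₊ := by
  set r := m / s with hr
  have hmr : s * r = m := Nat.mul_div_cancel' hs
  have hs0 : s ≠ 0 := by omega
  have hr2 : 2 ≤ r := by
    by_contra h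
    push_neg at h
    interval_cases r <;> omega
  have hr0 : r ≠ 0 := by omega
  rcases Nat.eq_zero_or_pos n with hn | hn
  · subst hn
    have hfz : ⌊((0:ℕ) : ℝ) * Real.logb 2 (m : ℝ)⌋₊ = 0 := by simp
    rw [hfz]
    have ht1 : ∀ i j : Fin t, i = j := by
      intro i j
      by_contra h
      exact hMV.2 i j h (by simp [mvInner])
    haveI : Subsingleton (Fin t) := ⟨ht1⟩
    calc ({i : Fin t | ∀ k, (ZMod.cast (U i k) : ZMod s) = w k}).ncard
        ≤ (Set.univ : Set (Fin t)).ncard :=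
          Set.ncard_le_ncard (Set.subset_univ _) Set.finite_univ
      _ = t := by rw [Set.ncard_univ, Nat.card_eq_fintype_card, Fintype.card_fin]
      _ ≤ 1 := by
          have := Fintype.card_le_one_iff.mpr ht1
          simpa using this
      _ ≤ MVmax r 0 := mvOneMem r hr0
  · have hm4 : 4 ≤ m := by
      calc 4 = 2 * 2 := rfl
        _ ≤ s * r := Nat.mul_le_mul hs1 hr2
        _ = m := hmr
    have hfloor : n + 1 ≤ ⌊(n : ℝ) * Real.logb 2 (m : ℝ)⌋₊ := by
      apply Nat.le_floor
      have hm4' : (4:ℝ) ≤ (m:ℝ) := by exact_mod_cast hm4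
      have hlogb : (2:ℝ) ≤ Real.logb 2 m := by
        rw [Real.le_logb_iff_rpow_le (by norm_num) (by linarith)]
        calc (2:ℝ) ^ (2:ℝ) = 4 := by
              rw [show (2:ℝ) = ((2:ℕ):ℝ) from by norm_num, Real.rpow_natCast]; norm_num
          _ ≤ m := hm4'
      have hn1 : (1:ℝ) ≤ (n:ℝ) := by exact_mod_cast hn
      push_cast
      nlinarith
    exact (bucket_one m n s hs hs1 hsm U V hMV w).trans (mvmax_mono r hr0 hfloor)

/-- Lemma 5.3 (Bucket Lemma): for any `w ∈ (ZMod s)^n`, the number of elements of `U`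
congruent to `w` modulo `s` is at most `MV(m/s, n·log m)`, and similarly for `V`. -/
theorem bucket_bound (m n s : ℕ) (hm : 2 ≤ m) (hs : s ∣ m) (hs1 : 1 < s) (hsm : s < m)
    (t : ℕ) (U V : Fin t → Fin n → ZMod m) (hMV : IsMVFamily m n t U V)
    (w : Fin n → ZMod s) :
    ({i : Fin t | ∀ k, (ZMod.cast (U i k) : ZMod s) = w k}).ncard ≤
        MVmax (m / s) ⌊(n : ℝ) * Real.logb 2 (m : ℝ)⌋₊ ∧
    ({i : Fin t | ∀ k, (ZMod.cast (V i k) : ZMod s) = w k}).ncard ≤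
        MVmax (m / s) ⌊(n : ℝ) * Real.logb 2 (m : ℝ)⌋₊ :=
  ⟨bucket_bound_aux m n s hs hs1 hsm U V hMV w,
   bucket_bound_aux m n s hs hs1 hsm V U (isMVFamily_swap hMV) w⟩
end

section
/- Let (U,V) be a matching vector family in Z_m^n of size t ≥ 3m, and let ω = exp(2πi/m) be a primitive m-th root of unity. Then there exists some j with 1 ≤ j ≤ m−1 such that D_{ω^j}(U,V) ≥ 2/(3 m^{3/2}). -/
open Finset

/-- The duality measure `D_ω(U,V) = |E_{i,j}[ω^{⟨u_i, v_j⟩}]|`. -/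
noncomputable def dualMeasure {m n t : ℕ} (ω : ℂ) (U V : Fin t → Fin n → ZMod m) : ℝ :=
  ‖((∑ i : Fin t, ∑ j : Fin t, ω ^ (mvInner (U i) (V j)).val) /
    ((t : ℂ) * (t : ℂ)))‖


/-!
By orthogonality of the characters `x ↦ ω^{jx}` of `ZMod m`, summing the averages
`E_{i,i'}[ω^{j⟨u_i, v_i'⟩}]` over all `j < m` gives `m` times the density of the pairs with
`⟨u_i, v_i'⟩ = 0`, which for an MV family are exactly the diagonal ones: the total is `m/t`.
The term `j = 0` equals `1`, so the `m - 1` nontrivial terms sum to `m/t - 1`, of norm at least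
`2/3` once `t ≥ 3m`; one of them therefore has norm at least `2/(3(m-1)) ≥ 2/(3 m^{3/2})`.
-/

theorem IsPrimitiveRoot.sum_range_pow_pow_val {R : Type*} [CommRing R] [IsDomain R] {ω : R}
    {m : ℕ} [NeZero m] (hω : IsPrimitiveRoot ω m) (a : ZMod m) :
    ∑ j ∈ range m, (ω ^ j) ^ a.val = if a = 0 then (m : R) else 0 := by
  simp_rw [← pow_mul, mul_comm _ a.val, pow_mul]
  split_ifs with ha
  · simp [ha]
  · have hne : ω ^ a.val - 1 ≠ 0 := by
      rwa [sub_ne_zero, Ne, hω.pow_eq_one_iff_dvd, ← ZMod.natCast_eq_zero_iff,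
        ZMod.natCast_zmod_val]
    have hgeom := geom_sum_mul (ω ^ a.val) m
    rw [← pow_mul, mul_comm a.val m, pow_mul, hω.pow_eq_one, one_pow, sub_self] at hgeom
    exact (mul_eq_zero.mp hgeom).resolve_right hne

theorem Finset.exists_norm_sum_div_card_le_norm {ι E : Type*} [SeminormedAddCommGroup E]
    {s : Finset ι} (hs : s.Nonempty) (f : ι → E) :
    ∃ i ∈ s, ‖∑ i ∈ s, f i‖ / #s ≤ ‖f i‖ := by
  refine exists_le_of_sum_le hs ?_
  rw [sum_const, nsmul_eq_mul, mul_div_cancel₀ _ (by exact_mod_cast hs.card_pos.ne')]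
  exact norm_sum_le s f

section DualAverage

variable {m n t : ℕ}

noncomputable def dualAverage (ω : ℂ) (U V : Fin t → Fin n → ZMod m) : ℂ :=
  (∑ i : Fin t, ∑ j : Fin t, ω ^ (mvInner (U i) (V j)).val) / ((t : ℂ) * (t : ℂ))

theorem dualMeasure_eq_norm_dualAverage (ω : ℂ) (U V : Fin t → Fin n → ZMod m) :
    dualMeasure ω U V = ‖dualAverage ω U V‖ := rfl

theorem dualAverage_one (ht : t ≠ 0) (U V : Fin t → Fin n → ZMod m) :
    dualAverage 1 U V = 1 := by
  have : (t : ℂ) ≠ 0 := by exact_mod_cast ht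
  simp [dualAverage, this]

theorem IsMVFamily.sum_range_dualAverage_pow [NeZero m] {U V : Fin t → Fin n → ZMod m}
    (hMV : IsMVFamily m n t U V) {ω : ℂ} (hω : IsPrimitiveRoot ω m) :
    ∑ j ∈ range m, dualAverage (ω ^ j) U V = m / t := by
  have hdiag : ∀ i : Fin t, ∑ i' : Fin t,
      (if mvInner (U i) (V i') = 0 then (m : ℂ) else 0) = m := fun i => by
    rw [sum_eq_single i (fun i' _ hi' => if_neg (hMV.2 i i' hi'.symm)) (by simp), if_pos (hMV.1 i)]
  calc ∑ j ∈ range m, dualAverage (ω ^ j) U V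
      = (∑ i : Fin t, ∑ i' : Fin t, ∑ j ∈ range m, (ω ^ j) ^ (mvInner (U i) (V i')).val) /
          ((t : ℂ) * t) := by
        simp_rw [dualAverage, ← sum_div, sum_comm (s := range m) (t := (univ : Finset (Fin t)))]
    _ = t * m / (t * t) := by
        simp_rw [hω.sum_range_pow_pow_val, hdiag, sum_const, card_univ, Fintype.card_fin,
          nsmul_eq_mul]
    _ = m / t := by
        rcases eq_or_ne (t : ℂ) 0 with h | h
        · simp [h]
        · rw [mul_div_mul_left _ _ h]

end DualAverage

theorem two_div_three_mul_rpow_le {m t : ℝ} (hm : 1 < m) (ht : 3 * m ≤ t) :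
    2 / (3 * m ^ ((3 : ℝ) / 2)) ≤ (1 - m / t) / (m - 1) := by
  have ht0 : 0 < t := by linarith
  have hdensity : 2 / 3 ≤ 1 - m / t := by
    rw [le_sub_comm, div_le_iff₀ ht0]
    linarith
  have hpow : m - 1 ≤ m ^ ((3 : ℝ) / 2) :=
    (sub_le_self m zero_le_one).trans (Real.self_le_rpow_of_one_le hm.le (by norm_num))
  calc 2 / (3 * m ^ ((3 : ℝ) / 2)) = (2 / 3) / m ^ ((3 : ℝ) / 2) := by rw [div_mul_eq_div_div]
    _ ≤ (1 - m / t) / (m - 1) := div_le_div₀ (by linarith) hdensity (by linarith) hpow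

/-- Lemma 6.2: an MV family of size at least `3m` has a biased character:
`D_{ω^j}(U,V) ≥ 2/(3 m^{3/2})` for some `1 ≤ j ≤ m-1`, where `ω = exp(2πi/m)`. -/
theorem mv_family_biased_character (m n t : ℕ) (hm : 2 ≤ m) (ht : 3 * m ≤ t)
    (U V : Fin t → Fin n → ZMod m) (hMV : IsMVFamily m n t U V) :
    ∃ j : ℕ, 1 ≤ j ∧ j ≤ m - 1 ∧
      2 / (3 * (m : ℝ) ^ ((3 : ℝ) / 2)) ≤
        dualMeasure (Complex.exp (2 * Real.pi * Complex.I / (m : ℂ)) ^ j) U V := by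
  have : NeZero m := ⟨by omega⟩
  set ω := Complex.exp (2 * Real.pi * Complex.I / (m : ℂ))
  have hmR : (1 : ℝ) < m := by exact_mod_cast hm
  have htR : 3 * (m : ℝ) ≤ t := by exact_mod_cast ht
  have hnontrivial : ∑ j ∈ Ico 1 m, dualAverage (ω ^ j) U V = ((m / t - 1 : ℝ) : ℂ) := by
    have h := hMV.sum_range_dualAverage_pow (Complex.isPrimitiveRoot_exp m (NeZero.ne m))
    rw [sum_range_eq_add_Ico _ (by omega), pow_zero, dualAverage_one (by omega)] at h
    push_cast
    linear_combination h
  have hnorm : ‖((m / t - 1 : ℝ) : ℂ)‖ = 1 - m / t := by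
    rw [Complex.norm_real, Real.norm_eq_abs, abs_of_nonpos, neg_sub]
    rw [sub_nonpos, div_le_one (by linarith)]
    linarith
  obtain ⟨j, hj, hbound⟩ := exists_norm_sum_div_card_le_norm
    (nonempty_Ico.mpr (by omega : 1 < m)) fun j => dualAverage (ω ^ j) U V
  rw [hnontrivial, hnorm, Nat.card_Ico, Nat.cast_sub (by omega), Nat.cast_one] at hbound
  rw [mem_Ico] at hj
  refine ⟨j, hj.1, by omega, ?_⟩
  rw [dualMeasure_eq_norm_dualAverage]
  exact (two_div_three_mul_rpow_le hmR htR).trans hbound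
end

section
/- Let μ be a probability distribution over Z_m and let U_m denote the uniform distribution over Z_m. If the statistical distance Δ(μ, U_m) ≥ ε, then there exists j with 1 ≤ j ≤ m−1 such that |E_{x∼μ}[(ω^j)^x]| ≥ 2ε/√m, where ω = exp(2πi/m) is a primitive m-th root of unity. -/
open Finset ComplexConjugate

/-! With `ν = μ - 1/m`, Cauchy–Schwarz gives `(∑ |ν|)² ≤ m ∑ ν²`, and Parseval for the
characters of `ZMod m` says the squared Fourier coefficients `‖∑ ν x ψ x‖²` of `ν` sum to
`m ∑ ν²`. The trivial coefficient is `∑ ν = 0`, so one of the `m - 1` nontrivial ones is at least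
`(∑ |ν|)² / m`; at a nontrivial character the coefficients of `ν` and `μ` agree. Finally every
nontrivial character of `ZMod m` is `x ↦ (ω ^ j) ^ x.val` with `0 < j < m`. -/

namespace AddChar

variable {α : Type*} [AddCommGroup α] [Fintype α]

lemma apply_mul_conj_apply (ψ : AddChar α ℂ) (x y : α) : ψ x * conj (ψ y) = ψ (x - y) := by
  rw [← map_neg_eq_conj, ← map_add_eq_mul, sub_eq_add_neg]

theorem sum_norm_sq_sum_mul_apply (f : α → ℂ) :
    ∑ ψ : AddChar α ℂ, ‖∑ x, f x * ψ x‖ ^ 2 = Fintype.card α * ∑ x, ‖f x‖ ^ 2 := by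
  classical
  have expand (ψ : AddChar α ℂ) : (∑ x, f x * ψ x) * conj (∑ y, f y * ψ y) =
      ∑ x, ∑ y, f x * conj (f y) * ψ (x - y) := by
    simp_rw [map_sum, map_mul, sum_mul_sum, ← apply_mul_conj_apply]
    exact sum_congr rfl fun x _ => sum_congr rfl fun y _ => by ring
  apply Complex.ofReal_injective
  push_cast
  simp_rw [← Complex.mul_conj', expand]
  rw [sum_comm]
  -- orthogonality: `∑ ψ, ψ (x - y)` vanishes unless `x = y`
  simp_rw [sum_comm (s := (univ : Finset (AddChar α ℂ))), ← mul_sum, sum_apply_eq_ite,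
    sub_eq_zero, mul_ite, mul_zero, sum_ite_eq, mem_univ, if_true, mul_sum]
  exact sum_congr rfl fun x _ => mul_comm _ _

lemma sum_sub_const_mul_apply {A R : Type*} [AddGroup A] [Fintype A] [CommRing R] [IsDomain R]
    [CharZero R] {ψ : AddChar A R} (hψ : ψ ≠ 0) (f : A → R) (c : R) :
    ∑ x, (f x - c) * ψ x = ∑ x, f x * ψ x := by
  simp_rw [sub_mul, sum_sub_distrib, ← mul_sum, sum_eq_zero_iff_ne_zero.2 hψ, mul_zero, sub_zero]

variable [Nontrivial α]

theorem exists_ne_zero_sq_sum_abs_div_card_le (ν : α → ℝ) (hν : ∑ x, ν x = 0) :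
    ∃ ψ : AddChar α ℂ, ψ ≠ 0 ∧
      (∑ x, |ν x|) ^ 2 / Fintype.card α ≤ ‖∑ x, (ν x : ℂ) * ψ x‖ ^ 2 := by
  set n := Fintype.card α
  set bias : AddChar α ℂ → ℝ := fun ψ => ‖∑ x, (ν x : ℂ) * ψ x‖ ^ 2
  set nontrivialChars := univ.erase (0 : AddChar α ℂ)
  have hn : 1 < n := Fintype.one_lt_card
  have hcard : #nontrivialChars = n - 1 := by
    rw [card_erase_of_mem (mem_univ _), card_univ, card_eq]
  have htrivial : bias 0 = 0 := by
    simp [bias, ← Complex.ofReal_sum, hν]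
  have hparseval : ∑ ψ ∈ nontrivialChars, bias ψ = n * ∑ x, ν x ^ 2 := by
    rw [sum_erase _ htrivial, sum_norm_sq_sum_mul_apply]
    simp only [Complex.norm_real, Real.norm_eq_abs, sq_abs, n]
  have hcauchy : (∑ x, |ν x|) ^ 2 ≤ n * ∑ x, ν x ^ 2 := by
    simpa using sq_sum_le_card_mul_sum_sq (s := univ) (f := fun x => |ν x|)
  have hnonempty : nontrivialChars.Nonempty := by
    rw [← card_pos, hcard]; omega
  have hsum :
      ∑ _ψ ∈ nontrivialChars, (∑ x, |ν x|) ^ 2 / n ≤ ∑ ψ ∈ nontrivialChars, bias ψ := by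
    rw [sum_const, hcard, nsmul_eq_mul, hparseval]
    calc ((n - 1 : ℕ) : ℝ) * ((∑ x, |ν x|) ^ 2 / n) ≤ n * ((∑ x, |ν x|) ^ 2 / n) := by
          gcongr; exact_mod_cast n.sub_le 1
      _ = (∑ x, |ν x|) ^ 2 := by field_simp
      _ ≤ n * ∑ x, ν x ^ 2 := hcauchy
  obtain ⟨ψ, hψ, hle⟩ := exists_le_of_sum_le hnonempty hsum
  exact ⟨ψ, ne_of_mem_erase hψ, hle⟩

theorem exists_ne_zero_sum_abs_sub_div_sqrt_card_le (μ : α → ℝ) (hμ : ∑ x, μ x = 1) :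
    ∃ ψ : AddChar α ℂ, ψ ≠ 0 ∧
      (∑ x, |μ x - 1 / Fintype.card α|) / √(Fintype.card α) ≤ ‖∑ x, (μ x : ℂ) * ψ x‖ := by
  have hν : ∑ x, (μ x - 1 / Fintype.card α) = 0 := by
    rw [sum_sub_distrib, hμ, sum_const, card_univ, nsmul_eq_mul,
      mul_one_div_cancel (Nat.cast_ne_zero.2 Fintype.card_ne_zero), sub_self]
  obtain ⟨ψ, hψ, hle⟩ := exists_ne_zero_sq_sum_abs_div_card_le _ hν
  refine ⟨ψ, hψ, le_of_sq_le_sq ?_ (norm_nonneg _)⟩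
  rw [div_pow, Real.sq_sqrt (Nat.cast_nonneg _)]
  push_cast at hle
  rwa [sum_sub_const_mul_apply hψ] at hle

end AddChar

lemma ZMod.exists_addChar_apply_eq_pow_pow_val {m : ℕ} [NeZero m] {R : Type*} [CommRing R]
    [IsDomain R] {ζ : R} (hζ : IsPrimitiveRoot ζ m) {ψ : AddChar (ZMod m) R} (hψ : ψ ≠ 0) :
    ∃ j, 1 ≤ j ∧ j < m ∧ ∀ x, ψ x = (ζ ^ j) ^ x.val := by
  have hpow : ψ 1 ^ m = 1 := by
    rw [← AddChar.map_nsmul_eq_pow, nsmul_one, ZMod.natCast_self, AddChar.map_zero_eq_one]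
  obtain ⟨j, hjm, hj⟩ := hζ.eq_pow_of_pow_eq_one hpow
  have hψ_eq (x : ZMod m) : ψ x = (ζ ^ j) ^ x.val := by
    rw [hj, ← AddChar.map_nsmul_eq_pow, nsmul_one, ZMod.natCast_zmod_val]
  refine ⟨j, Nat.one_le_iff_ne_zero.2 ?_, hjm, hψ_eq⟩
  rintro rfl
  exact hψ (AddChar.eq_zero_iff.2 fun x => by simp [hψ_eq])

theorem char_bias_of_stat_distance_general (m : ℕ) [NeZero m] (hm : 2 ≤ m)
    (μ : ZMod m → ℝ) (hsum : ∑ x, μ x = 1)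
    (ε : ℝ) (hdist : ε ≤ (1 / 2) * ∑ x : ZMod m, |μ x - 1 / (m : ℝ)|) :
    ∃ j : ℕ, 1 ≤ j ∧ j ≤ m - 1 ∧
      2 * ε / Real.sqrt (m : ℝ) ≤
        ‖(∑ x : ZMod m,
          (μ x : ℂ) * (Complex.exp (2 * Real.pi * Complex.I / (m : ℂ)) ^ j) ^ x.val)‖ := by
  have : Nontrivial (ZMod m) := ZMod.nontrivial_iff.2 (by omega)
  obtain ⟨ψ, hψ, hbias⟩ := AddChar.exists_ne_zero_sum_abs_sub_div_sqrt_card_le μ hsum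
  obtain ⟨j, hj1, hjm, hψj⟩ :=
    ZMod.exists_addChar_apply_eq_pow_pow_val (Complex.isPrimitiveRoot_exp m (NeZero.ne m)) hψ
  refine ⟨j, hj1, by omega, ?_⟩
  simp_rw [← hψj]
  rw [ZMod.card] at hbias
  calc 2 * ε / √m ≤ (∑ x, |μ x - 1 / (m : ℝ)|) / √m := by gcongr; linarith
    _ ≤ _ := hbias

/-- Lemma 2.10: if a distribution `μ` on `ZMod m` is `ε`-far from uniform in statistical
distance, then some nontrivial character has bias at least `2ε/√m`. -/
theorem char_bias_of_stat_distance (m : ℕ) [NeZero m] (hm : 2 ≤ m)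
    (μ : ZMod m → ℝ) (hpos : ∀ x, 0 ≤ μ x) (hsum : ∑ x, μ x = 1)
    (ε : ℝ) (hdist : ε ≤ (1 / 2) * ∑ x : ZMod m, |μ x - 1 / (m : ℝ)|) :
    ∃ j : ℕ, 1 ≤ j ∧ j ≤ m - 1 ∧
      2 * ε / Real.sqrt (m : ℝ) ≤
        ‖(∑ x : ZMod m,
          (μ x : ℂ) * (Complex.exp (2 * Real.pi * Complex.I / (m : ℂ)) ^ j) ^ x.val)‖ :=
  char_bias_of_stat_distance_general m hm μ hsum ε hdist
end

section
/- Let ω be a complex primitive m-th root of unity and let μ_1, μ_2 be probability distributions over Z_m^n. If |E_{x∼μ_1, y∼μ_2}[ω^{⟨x,y⟩}]| ≥ ε, then cp(μ_1)·cp(μ_2) ≥ ε^2/m^n. -/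
/-!
Write the bias as `∑ₓ μ₁(x) f(x)` with `f(x) = ∑_y μ₂(y) ω^⟨x,y⟩`. Cauchy–Schwarz bounds its
square by `cp(μ₁) · ∑ₓ |f(x)|²`, and since `y ↦ ω^⟨·,y⟩` are distinct characters of `Z_mⁿ`
(ω being primitive), Parseval gives `∑ₓ |f(x)|² = mⁿ · cp(μ₂)`.
-/

open Finset

lemma norm_sum_mul_sq_le {ι α : Type*} [SeminormedRing α] (s : Finset ι) (f g : ι → α) :
    ‖∑ i ∈ s, f i * g i‖ ^ 2 ≤ (∑ i ∈ s, ‖f i‖ ^ 2) * ∑ i ∈ s, ‖g i‖ ^ 2 := by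
  have h : ‖∑ i ∈ s, f i * g i‖ ≤ ∑ i ∈ s, ‖f i‖ * ‖g i‖ :=
    (norm_sum_le _ _).trans (sum_le_sum fun i _ => norm_mul_le _ _)
  exact (pow_le_pow_left₀ (norm_nonneg _) h 2).trans (sum_mul_sq_le_sq_mul_sq _ _ _)

namespace AddChar

variable {ι R M : Type*} [Fintype ι] [CommRing R]

def dotProductRight [CommMonoid M] (ψ : AddChar R M) (y : ι → R) : AddChar (ι → R) M where
  toFun x := ψ (x ⬝ᵥ y)
  map_zero_eq_one' := by simp
  map_add_eq_mul' a b := by rw [add_dotProduct, map_add_eq_mul]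

@[simp]
lemma dotProductRight_apply [CommMonoid M] (ψ : AddChar R M) (y x : ι → R) :
    ψ.dotProductRight y x = ψ (x ⬝ᵥ y) :=
  rfl

lemma IsPrimitive.dotProductRight_eq_zero_iff [CommMonoid M] {ψ : AddChar R M}
    (hψ : ψ.IsPrimitive) {y : ι → R} : ψ.dotProductRight y = 0 ↔ y = 0 := by
  classical
  refine ⟨fun h => ?_, fun h => by ext x; simp [h]⟩
  by_contra hy
  obtain ⟨k, hk⟩ := Function.ne_iff.mp hy
  obtain ⟨a, ha⟩ := ne_one_iff.mp (hψ hk)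
  apply ha
  simpa [mul_comm] using DFunLike.congr_fun h (Pi.single k a)

lemma IsPrimitive.sum_apply_dotProduct [DecidableEq ι] [Fintype R] [DecidableEq R]
    [CommRing M] [IsDomain M]
    {ψ : AddChar R M} (hψ : ψ.IsPrimitive) (y : ι → R) :
    ∑ x, ψ (x ⬝ᵥ y) = if y = 0 then (Fintype.card R : M) ^ Fintype.card ι else 0 := by
  classical
  simpa [hψ.dotProductRight_eq_zero_iff] using (ψ.dotProductRight y).sum_eq_ite

variable {K : Type*} [RCLike K]

lemma IsPrimitive.sum_norm_sq_sum_mul_apply_dotProduct [DecidableEq ι] [Fintype R]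
    [DecidableEq R] {ψ : AddChar R K} (hψ : ψ.IsPrimitive) (g : (ι → R) → K) :
    ∑ x, ‖∑ y, g y * ψ (x ⬝ᵥ y)‖ ^ 2
      = (Fintype.card R : ℝ) ^ Fintype.card ι * ∑ y, ‖g y‖ ^ 2 := by
  have hconj (x y : ι → R) : (starRingEnd K) (ψ (x ⬝ᵥ y)) = ψ (x ⬝ᵥ (-y)) := by
    rw [dotProduct_neg, map_neg_eq_conj]
  apply RCLike.ofReal_injective (K := K)
  push_cast
  calc ∑ x, ((‖∑ y, g y * ψ (x ⬝ᵥ y)‖ : ℝ) : K) ^ 2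
      = ∑ x, (∑ y, g y * ψ (x ⬝ᵥ y)) * (starRingEnd K) (∑ y, g y * ψ (x ⬝ᵥ y)) := by
        simp only [RCLike.mul_conj]
    _ = ∑ y, ∑ y', g y * (starRingEnd K) (g y') * ∑ x, ψ (x ⬝ᵥ (y - y')) := by
        simp_rw [map_sum, map_mul, hconj, sum_mul_sum, mul_sum]
        rw [sum_comm]
        refine sum_congr rfl fun y _ => ?_
        rw [sum_comm]
        refine sum_congr rfl fun y' _ => sum_congr rfl fun x _ => ?_
        rw [sub_eq_add_neg, dotProduct_add, map_add_eq_mul]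
        ring
    _ = ∑ y, g y * (starRingEnd K) (g y) * (Fintype.card R : K) ^ Fintype.card ι := by
        simp only [hψ.sum_apply_dotProduct, sub_eq_zero, mul_ite, mul_zero, sum_ite_eq,
          mem_univ, if_true]
    _ = (Fintype.card R : K) ^ Fintype.card ι * ∑ y, ((‖g y‖ : ℝ) : K) ^ 2 := by
        simp only [RCLike.mul_conj, mul_sum, mul_comm]

end AddChar

theorem collision_prob_of_bias_general (m n : ℕ) [NeZero m]
    (ω : ℂ) (hω : IsPrimitiveRoot ω m)
    (μ₁ μ₂ : (Fin n → ZMod m) → ℝ)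
    (ε : ℝ) (hε : 0 ≤ ε)
    (hbias : ε ≤ ‖(∑ x : Fin n → ZMod m, ∑ y : Fin n → ZMod m,
      (μ₁ x : ℂ) * (μ₂ y : ℂ) * ω ^ (mvInner x y).val)‖) :
    ε ^ 2 / (m : ℝ) ^ n ≤ (∑ x, (μ₁ x) ^ 2) * (∑ y, (μ₂ y) ^ 2) := by
  set ψ := AddChar.zmodChar m hω.pow_eq_one
  have hψ : ψ.IsPrimitive := AddChar.zmodChar_primitive_of_primitive_root m hω
  set f : (Fin n → ZMod m) → ℂ := fun x => ∑ y, (μ₂ y : ℂ) * ψ (x ⬝ᵥ y)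
  have hbias_eq : ∑ x : Fin n → ZMod m, ∑ y : Fin n → ZMod m,
      (μ₁ x : ℂ) * (μ₂ y : ℂ) * ω ^ (mvInner x y).val = ∑ x, (μ₁ x : ℂ) * f x := by
    simp only [f, mul_sum, mul_assoc]
    -- `ω ^ a.val` is `ψ a` and `mvInner` is `⬝ᵥ` definitionally
    rfl
  have hparseval : ∑ x, ‖f x‖ ^ 2 = (m : ℝ) ^ n * ∑ y, μ₂ y ^ 2 := by
    simpa using hψ.sum_norm_sq_sum_mul_apply_dotProduct fun y => (μ₂ y : ℂ)
  rw [div_le_iff₀ (pow_pos (Nat.cast_pos.mpr (NeZero.pos m)) n)]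
  calc ε ^ 2 ≤ ‖∑ x, (μ₁ x : ℂ) * f x‖ ^ 2 := pow_le_pow_left₀ hε (hbias_eq ▸ hbias) 2
    _ ≤ (∑ x, μ₁ x ^ 2) * ((m : ℝ) ^ n * ∑ y, μ₂ y ^ 2) := by
      simpa [hparseval] using norm_sum_mul_sq_le univ (fun x => (μ₁ x : ℂ)) f
    _ = _ := by ring

/-- Lemma 2.11: if two distributions on `(ZMod m)^n` have a biased joint character sum, then
the product of their collision probabilities is at least `ε²/mⁿ`. -/
theorem collision_prob_of_bias (m n : ℕ) [NeZero m] (hm : 2 ≤ m)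
    (ω : ℂ) (hω : IsPrimitiveRoot ω m)
    (μ₁ μ₂ : (Fin n → ZMod m) → ℝ)
    (h₁pos : ∀ x, 0 ≤ μ₁ x) (h₁sum : ∑ x, μ₁ x = 1)
    (h₂pos : ∀ x, 0 ≤ μ₂ x) (h₂sum : ∑ x, μ₂ x = 1)
    (ε : ℝ) (hε : 0 ≤ ε)
    (hbias : ε ≤ ‖(∑ x : Fin n → ZMod m, ∑ y : Fin n → ZMod m,
      (μ₁ x : ℂ) * (μ₂ y : ℂ) * ω ^ (mvInner x y).val)‖) :
    ε ^ 2 / (m : ℝ) ^ n ≤ (∑ x, (μ₁ x) ^ 2) * (∑ y, (μ₂ y) ^ 2) :=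
  collision_prob_of_bias_general m n ω hω μ₁ μ₂ ε hε hbias
end

section
/- Let A, B ⊆ Z_m^n be sets and let ω be a complex primitive m-th root of unity. If A ⊆ Spec_ε(B), then there exist subsets A' ⊆ A and B' ⊆ B with |A'| ≥ |A|/m and |B'| ≥ ε^2 · (|A|/|span(A)|) · |B| such that D_ω(A',B') = 1, i.e., the inner product ⟨a,b⟩ mod m is the same constant for all a ∈ A', b ∈ B'. -/
/-!
Let `H` be the span of `A` and `S(h) = ∑_{b ∈ B} ω^⟨h,b⟩`. Orthogonality of the characters of
`H` makes `∑_{h ∈ H} |S(h)|²` equal to `|H|` times the number of pairs `(b, b') ∈ B²` whose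
characters agree on `H`. As `|S(a)| ≥ ε|B|` on `A ⊆ H`, there are at least `ε²|A||B|²/|H|` such
pairs, so one class `B'` of characters agreeing on `H` has at least `ε²|A||B|/|H|` elements.
On `A × B'` the value of `⟨a, b⟩` depends only on `a`, and pigeonholing `A` over these `m`
values gives `A'`.
-/

open Finset

namespace AddChar

variable {G ι : Type*} [AddCommGroup G]

theorem sum_sq_norm_sum_eq_card_mul [Fintype G] [DecidableEq (AddChar G ℂ)] (ψ : ι → AddChar G ℂ)
    (B : Finset ι) :
    ∑ g, ‖∑ b ∈ B, ψ b g‖ ^ 2 = Fintype.card G * ∑ b ∈ B, (#{b' ∈ B | ψ b' = ψ b} : ℝ) := by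
  apply Complex.ofReal_injective
  push_cast
  calc ∑ g, (‖∑ b ∈ B, ψ b g‖ : ℂ) ^ 2
      = ∑ g, ∑ b ∈ B, ∑ b' ∈ B, (ψ b' - ψ b) g := by
        refine sum_congr rfl fun g _ => ?_
        rw [← Complex.conj_mul', map_sum, sum_mul_sum]
        simp only [sub_apply, map_neg_eq_conj, mul_comm]
    _ = ∑ b ∈ B, ∑ b' ∈ B, ∑ g, (ψ b' - ψ b) g := by
        rw [sum_comm]; exact sum_congr rfl fun _ _ => sum_comm
    _ = Fintype.card G * ∑ b ∈ B, (#{b' ∈ B | ψ b' = ψ b} : ℂ) := by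
        simp only [sum_eq_ite, sub_eq_zero, mul_sum, ← sum_boole, mul_ite, mul_one, mul_zero]

theorem exists_large_subset_apply_eq [Nonempty ι] (ψ : ι → AddChar G ℂ) {A : Finset G}
    {H : AddSubgroup G} [Finite H] (hAH : (A : Set G) ⊆ H) (B : Finset ι) {ε : ℝ} (hε : 0 ≤ ε)
    (hA : ∀ a ∈ A, ε ≤ ‖(∑ b ∈ B, ψ b a) / #B‖) :
    ∃ b₀, ∃ B' ⊆ B, ε ^ 2 * (#A / Nat.card H) * #B ≤ #B' ∧ ∀ b ∈ B', ∀ a ∈ A, ψ b a = ψ b₀ a := by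
  classical
  have := Fintype.ofFinite H
  set φ : ι → AddChar H ℂ := fun b => (ψ b).compAddMonoidHom H.subtype
  have hH : (0 : ℝ) < Nat.card H := Nat.cast_pos.2 Nat.card_pos
  have hsq : ∀ a ∈ A, (ε * #B) ^ 2 ≤ ‖∑ b ∈ B, ψ b a‖ ^ 2 := fun a ha => by
    gcongr
    obtain hB0 | hBpos := (Nat.cast_nonneg (α := ℝ) #B).eq_or_lt
    · rw [← hB0, mul_zero]; positivity
    · have := hA a ha
      rwa [norm_div, Complex.norm_natCast, le_div_iff₀ hBpos] at this
  have hpairs : ε ^ 2 * #A * #B ^ 2 ≤ Nat.card H * ∑ b ∈ B, (#{b' ∈ B | φ b' = φ b} : ℝ) :=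
    calc ε ^ 2 * #A * #B ^ 2 = ∑ a ∈ A, (ε * #B) ^ 2 := by
          simp only [sum_const, nsmul_eq_mul]; ring
      _ ≤ ∑ a ∈ A, ‖∑ b ∈ B, ψ b a‖ ^ 2 := sum_le_sum hsq
      _ = ∑ h ∈ A.subtype (· ∈ H), ‖∑ b ∈ B, φ b h‖ ^ 2 :=
          (sum_subtype_of_mem (fun g => ‖∑ b ∈ B, ψ b g‖ ^ 2) fun a ha => hAH ha).symm
      _ ≤ ∑ h, ‖∑ b ∈ B, φ b h‖ ^ 2 := sum_le_univ_sum_of_nonneg fun _ => by positivity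
      _ = Nat.card H * ∑ b ∈ B, (#{b' ∈ B | φ b' = φ b} : ℝ) := by
          rw [sum_sq_norm_sum_eq_card_mul, Nat.card_eq_fintype_card]
  obtain rfl | hB := B.eq_empty_or_nonempty
  · exact ⟨Classical.arbitrary ι, ∅, subset_refl _, by simp, by simp⟩
  obtain ⟨b₀, -, hb₀⟩ := exists_le_of_sum_le hB (f := fun _ => ε ^ 2 * (#A / Nat.card H) * #B)
    (g := fun b => (#{b' ∈ B | φ b' = φ b} : ℝ)) (by
      rw [sum_const, nsmul_eq_mul]
      convert (div_le_iff₀' hH).2 hpairs using 1; ring)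
  refine ⟨b₀, _, filter_subset _ B, hb₀, fun b hb a ha => ?_⟩
  exact DFunLike.congr_fun (mem_filter.1 hb).2 ⟨a, hAH ha⟩

theorem zmodChar_injective {m : ℕ} [NeZero m] {ω : ℂ} (hω : IsPrimitiveRoot ω m) :
    Function.Injective (zmodChar m hω.pow_eq_one) :=
  injective_iff.2 fun _ => ((zmodChar_primitive_of_primitive_root m hω).zmod_char_eq_one_iff m _).1

end AddChar

theorem spec_to_monochromatic_general (m n : ℕ) [NeZero m]
    (ω : ℂ) (hω : IsPrimitiveRoot ω m)
    (A B : Finset (Fin n → ZMod m)) (ε : ℝ) (hε : 0 ≤ ε)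
    (hspec : ∀ a ∈ A,
      ε ≤ ‖(∑ b ∈ B, ω ^ (mvInner a b).val) / (B.card : ℂ)‖) :
    ∃ A' ⊆ A, ∃ B' ⊆ B,
      (A.card : ℝ) / (m : ℝ) ≤ (A'.card : ℝ) ∧
      ε ^ 2 * ((A.card : ℝ) /
        (((AddSubgroup.closure (A : Set (Fin n → ZMod m)) :
          AddSubgroup (Fin n → ZMod m)) : Set (Fin n → ZMod m)).ncard : ℝ)) * (B.card : ℝ)
        ≤ (B'.card : ℝ) ∧
      ∃ c : ZMod m, ∀ a ∈ A', ∀ b ∈ B', mvInner a b = c := by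
  set χ : (Fin n → ZMod m) → AddChar (Fin n → ZMod m) ℂ := fun b =>
    (AddChar.zmodChar m hω.pow_eq_one).compAddMonoidHom
      (AddMonoidHom.mk' (mvInner · b) fun u v => add_dotProduct u v b)
  obtain ⟨b₀, B', hB'B, hB', hχ⟩ := AddChar.exists_large_subset_apply_eq χ
    AddSubgroup.subset_closure B hε hspec
  obtain ⟨c, -, hA'⟩ := exists_le_card_fiber_of_nsmul_le_card_of_maps_to
    (f := (mvInner · b₀)) (fun a _ => mem_univ (mvInner a b₀)) univ_nonempty (b := (#A / m : ℝ))
    (by rw [card_univ, ZMod.card, nsmul_eq_mul, mul_div_cancel₀ _ (NeZero.ne _)])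
  refine ⟨_, filter_subset _ A, B', hB'B, hA', by rwa [← Nat.card_coe_set_eq], c, ?_⟩
  intro a ha b hb
  obtain ⟨haA, rfl⟩ := mem_filter.1 ha
  exact AddChar.zmodChar_injective hω (hχ b hb a haA)

/-- Lemma 6.4: if `A ⊆ Spec_ε(B)`, then there are subsets `A' ⊆ A` with `|A'| ≥ |A|/m`
and `B' ⊆ B` with `|B'| ≥ ε²·(|A|/|span(A)|)·|B|` such that the inner product `⟨a,b⟩` is
the same constant for all `a ∈ A'`, `b ∈ B'` (i.e. `D_ω(A',B') = 1`). -/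
theorem spec_to_monochromatic (m n : ℕ) [NeZero m] (hm : 2 ≤ m)
    (ω : ℂ) (hω : IsPrimitiveRoot ω m)
    (A B : Finset (Fin n → ZMod m)) (ε : ℝ) (hε : 0 ≤ ε)
    (hspec : ∀ a ∈ A,
      ε ≤ ‖(∑ b ∈ B, ω ^ (mvInner a b).val) / (B.card : ℂ)‖) :
    ∃ A' ⊆ A, ∃ B' ⊆ B,
      (A.card : ℝ) / (m : ℝ) ≤ (A'.card : ℝ) ∧
      ε ^ 2 * ((A.card : ℝ) /
        (((AddSubgroup.closure (A : Set (Fin n → ZMod m)) :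
          AddSubgroup (Fin n → ZMod m)) : Set (Fin n → ZMod m)).ncard : ℝ)) * (B.card : ℝ)
        ≤ (B'.card : ℝ) ∧
      ∃ c : ZMod m, ∀ a ∈ A', ∀ b ∈ B', mvInner a b = c :=
  spec_to_monochromatic_general m n ω hω A B ε hε hspec
end

section
/- Let A, B ⊆ Z_m^n be sets and let ω be a complex primitive m-th root of unity. If |E_{a∼A, b∼B}[ω^{⟨a,b⟩}]| ≥ δ, then Pr_{a,a'∼A}[a − a' ∈ Spec_{δ^2/2}(B)] ≥ δ^2/2, where a, a' are independent uniform elements of A. -/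
open Finset

theorem Finset.sum_le_card_filter_le_add_mul_card {α : Type*} (s : Finset α) {f : α → ℝ}
    {t : ℝ} (hf : ∀ x ∈ s, f x ≤ 1) (ht : 0 ≤ t) :
    ∑ x ∈ s, f x ≤ #{x ∈ s | t ≤ f x} + t * #s := by
  rw [← sum_filter_add_sum_filter_not s (fun x ↦ t ≤ f x)]
  gcongr
  · simpa using sum_le_card_nsmul _ f 1 fun x hx ↦ hf x (mem_filter.1 hx).1
  · calc ∑ x ∈ s with ¬t ≤ f x, f x
        ≤ #{x ∈ s | ¬t ≤ f x} * t :=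
          by simpa using sum_le_card_nsmul _ f t fun x hx ↦ (not_le.1 (mem_filter.1 hx).2).le
      _ ≤ t * #s := by
          rw [mul_comm]; gcongr; exact filter_subset _ _

namespace AddChar

variable {G ι K : Type*} [AddCommGroup G] [Finite G] [RCLike K]

theorem sum_sum_sub_eq_norm_sq (ψ : AddChar G K) (A : Finset G) :
    ∑ a ∈ A, ∑ a' ∈ A, ψ (a - a') = (‖∑ a ∈ A, ψ a‖ ^ 2 : ℝ) := by
  simp only [map_sub_eq_div, div_eq_mul_inv, inv_apply_eq_conj, ← sum_mul_sum, ← map_sum,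
    RCLike.mul_conj, RCLike.ofReal_pow]

theorem norm_sq_sum_sum_le_card_mul_sum_norm_sum_sub (ψ : ι → AddChar G K) (A : Finset G)
    (B : Finset ι) :
    ‖∑ a ∈ A, ∑ b ∈ B, ψ b a‖ ^ 2 ≤ #B * ∑ p ∈ A ×ˢ A, ‖∑ b ∈ B, ψ b (p.1 - p.2)‖ := by
  have hsq : ∑ b ∈ B, ‖∑ a ∈ A, ψ b a‖ ^ 2 =
      RCLike.re (∑ p ∈ A ×ˢ A, ∑ b ∈ B, ψ b (p.1 - p.2)) := by
    rw [sum_comm, map_sum]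
    refine sum_congr rfl fun b _ ↦ ?_
    rw [sum_product, sum_sum_sub_eq_norm_sq, RCLike.ofReal_re]
  calc ‖∑ a ∈ A, ∑ b ∈ B, ψ b a‖ ^ 2
      ≤ (∑ b ∈ B, ‖∑ a ∈ A, ψ b a‖) ^ 2 := by
        rw [sum_comm]; gcongr; exact norm_sum_le _ _
    _ ≤ #B * ∑ b ∈ B, ‖∑ a ∈ A, ψ b a‖ ^ 2 := sq_sum_le_card_mul_sum_sq
    _ ≤ #B * ∑ p ∈ A ×ˢ A, ‖∑ b ∈ B, ψ b (p.1 - p.2)‖ := by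
        rw [hsq]; gcongr
        exact (RCLike.re_le_norm _).trans (norm_sum_le _ _)

theorem norm_sum_div_card_le_one (ψ : ι → AddChar G K) (B : Finset ι) (x : G) :
    ‖(∑ b ∈ B, ψ b x) / #B‖ ≤ 1 := by
  rw [norm_div, RCLike.norm_natCast]
  refine div_le_one_of_le₀ ?_ (Nat.cast_nonneg _)
  simpa using norm_sum_le B (ψ · x)

theorem le_card_filter_sub_of_le_norm_sum (ψ : ι → AddChar G K) (A : Finset G) {B : Finset ι}
    (hB : B.Nonempty) {δ : ℝ} (hδ : 0 ≤ δ) (hbias : δ * #A * #B ≤ ‖∑ a ∈ A, ∑ b ∈ B, ψ b a‖) :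
    δ ^ 2 / 2 * #A ^ 2 ≤ #{p ∈ A ×ˢ A | δ ^ 2 / 2 ≤ ‖(∑ b ∈ B, ψ b (p.1 - p.2)) / #B‖} := by
  have hB : (0 : ℝ) < #B := by exact_mod_cast hB.card_pos
  have hmean : δ ^ 2 * #A ^ 2 ≤ ∑ p ∈ A ×ˢ A, ‖(∑ b ∈ B, ψ b (p.1 - p.2)) / #B‖ := by
    have hcs := (pow_le_pow_left₀ (by positivity) hbias 2).trans
      (norm_sq_sum_sum_le_card_mul_sum_norm_sum_sub ψ A B)
    simp_rw [norm_div, RCLike.norm_natCast, ← sum_div]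
    rw [le_div_iff₀ hB]
    nlinarith
  have hmarkov := (A ×ˢ A).sum_le_card_filter_le_add_mul_card
    (fun p _ ↦ norm_sum_div_card_le_one ψ B (p.1 - p.2)) (t := δ ^ 2 / 2) (by positivity)
  rw [card_product, Nat.cast_mul] at hmarkov
  linarith

end AddChar

theorem mvInner_add_left {m n : ℕ} (u v w : Fin n → ZMod m) :
    mvInner (u + v) w = mvInner u w + mvInner v w := by
  simp only [mvInner, Pi.add_apply, add_mul, sum_add_distrib]

def mvInnerLeft {m n : ℕ} (w : Fin n → ZMod m) : (Fin n → ZMod m) →+ ZMod m :=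
  AddMonoidHom.mk' (mvInner · w) fun u v ↦ mvInner_add_left u v w

def mvInnerChar {m n : ℕ} [NeZero m] {C : Type*} [CommMonoid C] {ω : C} (hω : ω ^ m = 1)
    (w : Fin n → ZMod m) : AddChar (Fin n → ZMod m) C :=
  (AddChar.zmodChar m hω).compAddMonoidHom (mvInnerLeft w)

@[simp]
theorem mvInnerChar_apply {m n : ℕ} [NeZero m] {C : Type*} [CommMonoid C] {ω : C}
    (hω : ω ^ m = 1) (w v : Fin n → ZMod m) : mvInnerChar hω w v = ω ^ (mvInner v w).val :=
  AddChar.zmodChar_apply hω _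

theorem diff_in_spectrum_general (m n : ℕ) [NeZero m]
    (ω : ℂ) (hω : IsPrimitiveRoot ω m)
    (A B : Finset (Fin n → ZMod m)) (hA : A.Nonempty) (hB : B.Nonempty)
    (δ : ℝ) (hδ : 0 ≤ δ)
    (hbias : δ ≤ ‖((∑ a ∈ A, ∑ b ∈ B, ω ^ (mvInner a b).val) /
      ((A.card : ℂ) * (B.card : ℂ)))‖) :
    δ ^ 2 / 2 ≤
      (({p : (Fin n → ZMod m) × (Fin n → ZMod m) | p.1 ∈ A ∧ p.2 ∈ A ∧
          δ ^ 2 / 2 ≤ ‖((∑ b ∈ B, ω ^ (mvInner (p.1 - p.2) b).val) /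
            (B.card : ℂ))‖}).ncard : ℝ) / ((A.card : ℝ)) ^ 2 := by
  set ψ := mvInnerChar hω.pow_eq_one
  have hA' : (0 : ℝ) < #A := by exact_mod_cast hA.card_pos
  have hB' : (0 : ℝ) < #B := by exact_mod_cast hB.card_pos
  have hbias' : δ * #A * #B ≤ ‖∑ a ∈ A, ∑ b ∈ B, ψ b a‖ := by
    rw [norm_div, le_div_iff₀ (by simpa using mul_pos hA' hB')] at hbias
    simpa [ψ, mul_assoc] using hbias
  have hset : {p : (Fin n → ZMod m) × (Fin n → ZMod m) | p.1 ∈ A ∧ p.2 ∈ A ∧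
      δ ^ 2 / 2 ≤ ‖(∑ b ∈ B, ω ^ (mvInner (p.1 - p.2) b).val) / (B.card : ℂ)‖} =
      ↑{p ∈ A ×ˢ A | δ ^ 2 / 2 ≤ ‖(∑ b ∈ B, ψ b (p.1 - p.2)) / #B‖} := by
    ext; simp [ψ, and_assoc]
  rw [hset, Set.ncard_coe_finset, le_div_iff₀ (by positivity)]
  exact AddChar.le_card_filter_sub_of_le_norm_sum ψ A hB hδ hbias'

/-- Part of Claim 6.7: if `|E_{a∼A,b∼B}[ω^{⟨a,b⟩}]| ≥ δ`, then a random difference of two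
elements of `A` lies in `Spec_{δ²/2}(B)` with probability at least `δ²/2`. -/
theorem diff_in_spectrum (m n : ℕ) [NeZero m] (hm : 2 ≤ m)
    (ω : ℂ) (hω : IsPrimitiveRoot ω m)
    (A B : Finset (Fin n → ZMod m)) (hA : A.Nonempty) (hB : B.Nonempty)
    (δ : ℝ) (hδ : 0 ≤ δ)
    (hbias : δ ≤ ‖((∑ a ∈ A, ∑ b ∈ B, ω ^ (mvInner a b).val) /
      ((A.card : ℂ) * (B.card : ℂ)))‖) :
    δ ^ 2 / 2 ≤
      (({p : (Fin n → ZMod m) × (Fin n → ZMod m) | p.1 ∈ A ∧ p.2 ∈ A ∧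
          δ ^ 2 / 2 ≤ ‖((∑ b ∈ B, ω ^ (mvInner (p.1 - p.2) b).val) /
            (B.card : ℂ))‖}).ncard : ℝ) / ((A.card : ℝ)) ^ 2 :=
  diff_in_spectrum_general m n ω hω A B hA hB δ hδ hbias
end
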